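/- arXiv:1201.4799 — 4 statements merged into one kernel-verified Lean document; each statement's English description precedes it below -/
import Mathlib

section
/- Let U ⊆ ℂ be open and h : U → ℂ holomorphic with Im h′(z) ≠ 0 for all z ∈ U. Identify U with an open subset of ℝ² via z = x + iy and define u(x,y) = h(x+iy) + conj(h(x+iy)), v(x,y) = i·(h(x+iy) − conj(h(x+iy))), and θ(x,y) = (1/2)·arctan( Re h′(x+iy) / Im h′(x+iy) ). Then the Saint-Venant–Von Mises plasticity equation (u_y + v_x)·sin(2θ) + (u_x − v_y)·cos(2θ) = 0 holds at every point of U. -/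
/-!
Writing `c = h'(z)`, the Cauchy–Riemann equations give `u_x = -v_y = 2 Re c` and
`u_y = v_x = -2 Im c`, so the left-hand side is `4 (Re c · cos 2θ - Im c · sin 2θ)`, which vanishes
because `tan 2θ = Re c / Im c`.
-/

open Complex

theorem mul_sin_arctan_div_eq {a b : ℝ} (hb : b ≠ 0) :
    b * Real.sin (Real.arctan (a / b)) = a * Real.cos (Real.arctan (a / b)) := by
  rw [Real.sin_arctan, Real.cos_arctan]
  field_simp

section RealPlane

variable {h : ℂ → ℂ} {c : ℂ} {p : ℝ × ℝ}

theorem HasDerivAt.hasFDerivAt_comp_realPlane (hc : HasDerivAt h c (p.1 + p.2 * I)) :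
    HasFDerivAt (fun q : ℝ × ℝ => h (q.1 + q.2 * I))
      (c • (equivRealProdCLM.symm : ℝ × ℝ →L[ℝ] ℂ)) p := by
  have hfun : (fun q : ℝ × ℝ => h (q.1 + q.2 * I)) = h ∘ equivRealProdCLM.symm :=
    funext fun q => by simp [equivRealProdCLM_symm_apply]
  rw [hfun]
  rw [← equivRealProdCLM_symm_apply] at hc
  refine ((hc.hasFDerivAt.restrictScalars ℝ).comp p
    (equivRealProdCLM.symm : ℝ × ℝ →L[ℝ] ℂ).hasFDerivAt).congr_fderiv ?_
  ext <;> simp [mul_comm]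

theorem HasDerivAt.fderiv_clm_comp_realPlane (hc : HasDerivAt h c (p.1 + p.2 * I))
    (ℓ : ℂ →L[ℝ] ℝ) (w : ℝ × ℝ) :
    fderiv ℝ (fun q : ℝ × ℝ => ℓ (h (q.1 + q.2 * I))) p w = ℓ (c * (w.1 + w.2 * I)) := by
  rw [HasFDerivAt.fderiv (f := fun q : ℝ × ℝ => ℓ (h (q.1 + q.2 * I)))
    (ℓ.hasFDerivAt.comp p hc.hasFDerivAt_comp_realPlane)]
  simp [equivRealProdCLM_symm_apply]

end RealPlane

theorem stmt_4_general (U : Set ℂ) (h : ℂ → ℂ)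
    (hIm : ∀ z ∈ U, (deriv h z).im ≠ 0)
    (u v θ : ℝ × ℝ → ℝ)
    (hu : u = fun p => (h ((p.1 : ℂ) + (p.2 : ℂ) * Complex.I) +
      starRingEnd ℂ (h ((p.1 : ℂ) + (p.2 : ℂ) * Complex.I))).re)
    (hv : v = fun p => (Complex.I * (h ((p.1 : ℂ) + (p.2 : ℂ) * Complex.I) -
      starRingEnd ℂ (h ((p.1 : ℂ) + (p.2 : ℂ) * Complex.I)))).re)
    (hθ : θ = fun p => (1 / 2) * Real.arctan
      ((deriv h ((p.1 : ℂ) + (p.2 : ℂ) * Complex.I)).re /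
       (deriv h ((p.1 : ℂ) + (p.2 : ℂ) * Complex.I)).im)) :
    ∀ p : ℝ × ℝ, (p.1 : ℂ) + (p.2 : ℂ) * Complex.I ∈ U →
      (fderiv ℝ u p (0, 1) + fderiv ℝ v p (1, 0)) * Real.sin (2 * θ p) +
        (fderiv ℝ u p (1, 0) - fderiv ℝ v p (0, 1)) * Real.cos (2 * θ p) = 0 := by
  intro p hp
  set c := deriv h (p.1 + p.2 * I)
  have hb : c.im ≠ 0 := hIm _ hp
  -- `deriv` is junk `0` where `h` is not differentiable, so `Im c ≠ 0` forces differentiability.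
  have hc : HasDerivAt h c (p.1 + p.2 * I) :=
    (differentiableAt_of_deriv_ne_zero fun h0 => hb (by simp [c, h0])).hasDerivAt
  have hu' : u = fun q : ℝ × ℝ => ((2 : ℝ) • reCLM) (h (q.1 + q.2 * I)) := by
    subst hu; funext q; simp [add_conj]
  have hv' : v = fun q : ℝ × ℝ => ((-2 : ℝ) • imCLM) (h (q.1 + q.2 * I)) := by
    subst hv; funext q; simp [sub_conj]
  have h2θ : 2 * θ p = Real.arctan (c.re / c.im) := by
    subst hθ; ring
  rw [hu', hv', hc.fderiv_clm_comp_realPlane, hc.fderiv_clm_comp_realPlane,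
    hc.fderiv_clm_comp_realPlane, hc.fderiv_clm_comp_realPlane, h2θ]
  simp only [ofReal_zero, ofReal_one, one_mul, zero_add, smul_apply, reCLM_apply, mul_re, I_re,
    mul_zero, I_im, mul_one, zero_sub, smul_eq_mul, mul_neg, zero_mul, add_zero, imCLM_apply,
    neg_mul, mul_im, sub_neg_eq_add]
  linear_combination (-4) * mul_sin_arctan_div_eq (a := c.re) hb

theorem stmt_4 (U : Set ℂ) (hU : IsOpen U) (h : ℂ → ℂ) (hh : DifferentiableOn ℂ h U)
    (hIm : ∀ z ∈ U, (deriv h z).im ≠ 0)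
    (u v θ : ℝ × ℝ → ℝ)
    (hu : u = fun p => (h ((p.1 : ℂ) + (p.2 : ℂ) * Complex.I) +
      starRingEnd ℂ (h ((p.1 : ℂ) + (p.2 : ℂ) * Complex.I))).re)
    (hv : v = fun p => (Complex.I * (h ((p.1 : ℂ) + (p.2 : ℂ) * Complex.I) -
      starRingEnd ℂ (h ((p.1 : ℂ) + (p.2 : ℂ) * Complex.I)))).re)
    (hθ : θ = fun p => (1 / 2) * Real.arctan
      ((deriv h ((p.1 : ℂ) + (p.2 : ℂ) * Complex.I)).re /
       (deriv h ((p.1 : ℂ) + (p.2 : ℂ) * Complex.I)).im)) :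
    ∀ p : ℝ × ℝ, (p.1 : ℂ) + (p.2 : ℂ) * Complex.I ∈ U →
      (fderiv ℝ u p (0, 1) + fderiv ℝ v p (1, 0)) * Real.sin (2 * θ p) +
        (fderiv ℝ u p (1, 0) - fderiv ℝ v p (0, 1)) * Real.cos (2 * θ p) = 0 :=
  stmt_4_general U h hIm u v θ hu hv hθ
end

section
/- Let I ⊆ ℝ be an open interval, Ω ∈ ℝ, and g : I → ℝ a twice continuously differentiable function with g(ξ) > 0 for all ξ ∈ I, satisfying the ordinary differential equation g·g″ − (3/2)·(g′)² + (Ω/2)·g³ = 0 on I. Then the function ξ ↦ (g′(ξ))²/g(ξ)³ + Ω·ln g(ξ) is constant on I. -/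
/-!
The derivative of `g'^2 / g^3 + Ω log g` is `g' / g^4 * (2 g g'' - 3 g'^2 + Ω g^3)`, which is
`2 g' / g^4` times the left-hand side of the equation; so it vanishes along a positive solution,
and a function with zero derivative on an interval is constant.
-/

theorem hasDerivAt_sq_div_cube_add_mul_log {g g' : ℝ → ℝ} {g'' Ω x : ℝ}
    (hg : HasDerivAt g (g' x) x) (hg' : HasDerivAt g' g'' x) (hx : g x ≠ 0) :
    HasDerivAt (fun y => g' y ^ 2 / g y ^ 3 + Ω * Real.log (g y))
      (g' x / g x ^ 4 * (2 * g x * g'' - 3 * g' x ^ 2 + Ω * g x ^ 3)) x := by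
  refine (((hg'.fun_pow 2).fun_div (hg.fun_pow 3) (pow_ne_zero 3 hx)).fun_add
    ((hg.log hx).const_mul Ω)).congr_deriv ?_
  field_simp
  ring

theorem ContDiffOn.differentiableAt_deriv_of_isOpen {𝕜 F : Type*} [NontriviallyNormedField 𝕜]
    [NormedAddCommGroup F] [NormedSpace 𝕜 F] {f : 𝕜 → F} {s : Set 𝕜} {x : 𝕜}
    (hf : ContDiffOn 𝕜 2 f s) (hs : IsOpen s) (hx : x ∈ s) :
    DifferentiableAt 𝕜 (deriv f) x :=
  ((hf.deriv_of_isOpen hs (m := 1) le_rfl).differentiableOn one_ne_zero).differentiableAt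
    (hs.mem_nhds hx)

theorem IsOpen.is_const_of_hasDerivAt_zero {𝕜 G : Type*} [RCLike 𝕜] [NormedAddCommGroup G]
    [NormedSpace 𝕜 G] {f : 𝕜 → G} {s : Set 𝕜} (hs : IsOpen s) (hs' : IsPreconnected s)
    (hf : ∀ x ∈ s, HasDerivAt f 0 x) {x y : 𝕜} (hx : x ∈ s) (hy : y ∈ s) : f x = f y :=
  hs.is_const_of_deriv_eq_zero hs' (fun z hz => (hf z hz).differentiableAt.differentiableWithinAt)
    (fun z hz => (hf z hz).deriv) hx hy

theorem stmt_6 (a b : ℝ) (Ω : ℝ) (g : ℝ → ℝ)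
    (hg : ContDiffOn ℝ 2 g (Set.Ioo a b))
    (hpos : ∀ ξ ∈ Set.Ioo a b, 0 < g ξ)
    (hode : ∀ ξ ∈ Set.Ioo a b,
      g ξ * deriv (deriv g) ξ - (3 / 2) * (deriv g ξ) ^ 2 + (Ω / 2) * (g ξ) ^ 3 = 0) :
    ∀ ξ₁ ∈ Set.Ioo a b, ∀ ξ₂ ∈ Set.Ioo a b,
      (deriv g ξ₁) ^ 2 / (g ξ₁) ^ 3 + Ω * Real.log (g ξ₁) =
      (deriv g ξ₂) ^ 2 / (g ξ₂) ^ 3 + Ω * Real.log (g ξ₂) := by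
  intro ξ₁ hξ₁ ξ₂ hξ₂
  refine isOpen_Ioo.is_const_of_hasDerivAt_zero
    (f := fun ξ => deriv g ξ ^ 2 / g ξ ^ 3 + Ω * Real.log (g ξ)) isPreconnected_Ioo
    (fun ξ hξ => ?_) hξ₁ hξ₂
  have hg₁ : HasDerivAt g (deriv g ξ) ξ :=
    ((hg.differentiableOn two_ne_zero).differentiableAt (isOpen_Ioo.mem_nhds hξ)).hasDerivAt
  have hg₂ : HasDerivAt (deriv g) (deriv (deriv g) ξ) ξ :=
    (hg.differentiableAt_deriv_of_isOpen isOpen_Ioo hξ).hasDerivAt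
  have hE := hasDerivAt_sq_div_cube_add_mul_log (Ω := Ω) hg₁ hg₂ (hpos ξ hξ).ne'
  have hlhs : 2 * g ξ * deriv (deriv g) ξ - 3 * deriv g ξ ^ 2 + Ω * g ξ ^ 3 = 0 := by
    linear_combination 2 * hode ξ hξ
  rwa [hlhs, mul_zero] at hE
end

section
/- Let a ∈ ℝ, let U ⊆ ℝ² be open, and let u, φ : U → ℝ be twice continuously differentiable functions satisfying u_x + φ_y = √2·a·exp(u/2)·sin(φ/2) and u_y − φ_x = −√2·a·exp(u/2)·cos(φ/2) on U. Then u satisfies the Liouville equation u_xx + u_yy = a²·exp(u) on U. -/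
/-!
Differentiate the first equation in `x`, the second in `y`, and add: the mixed derivatives of
`φ` cancel, so `Δu = ∂ₓ(R sin(φ/2)) - ∂_y(R cos(φ/2))` with `R = √2 a e^{u/2}`. By the chain rule
this equals `R/2 · (sin(φ/2) (u_x + φ_y) - cos(φ/2) (u_y - φ_x))`, and substituting the system
once more gives `R²/2 · (sin² + cos²)(φ/2) = a² eᵘ`.
-/

open Real Filter Topology

section
variable {𝕜 E F : Type*} [NontriviallyNormedField 𝕜] [NormedAddCommGroup E] [NormedSpace 𝕜 E]
  [NormedAddCommGroup F] [NormedSpace 𝕜 F]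

theorem fderiv_fderiv_apply_const {f : E → F} {x : E} (hf : DifferentiableAt 𝕜 (fderiv 𝕜 f) x)
    (v w : E) : fderiv 𝕜 (fun y => fderiv 𝕜 f y v) x w = fderiv 𝕜 (fderiv 𝕜 f) x w v := by
  simp [fderiv_clm_apply hf (differentiableAt_const v)]

end

section
variable {E F : Type*} [NormedAddCommGroup E] [NormedSpace ℝ E]
  [NormedAddCommGroup F] [NormedSpace ℝ F]

-- With `G = H = 0` the hypotheses are the Cauchy–Riemann equations for `u - iφ` in the
-- directions `v, w`.
theorem fderiv_fderiv_add_eq_of_cauchyRiemann {u φ G H : E → F} {p : E} {v w : E}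
    (hφ : ContDiffAt ℝ 2 φ p) (hG : DifferentiableAt ℝ G p) (hH : DifferentiableAt ℝ H p)
    (hvw : (fun q => fderiv ℝ u q v + fderiv ℝ φ q w) =ᶠ[𝓝 p] G)
    (hwv : (fun q => fderiv ℝ u q w - fderiv ℝ φ q v) =ᶠ[𝓝 p] H) :
    fderiv ℝ (fun q => fderiv ℝ u q v) p v + fderiv ℝ (fun q => fderiv ℝ u q w) p w =
      fderiv ℝ G p v + fderiv ℝ H p w := by
  have hφ' : DifferentiableAt ℝ (fderiv ℝ φ) p :=
    (hφ.fderiv_right (m := 1) le_rfl).differentiableAt one_ne_zero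
  have hφv : DifferentiableAt ℝ (fun q => fderiv ℝ φ q v) p :=
    hφ'.clm_apply (differentiableAt_const v)
  have hφw : DifferentiableAt ℝ (fun q => fderiv ℝ φ q w) p :=
    hφ'.clm_apply (differentiableAt_const w)
  have huv : (fun q => fderiv ℝ u q v) =ᶠ[𝓝 p] fun q => G q - fderiv ℝ φ q w :=
    hvw.mono fun q hq => eq_sub_of_add_eq hq
  have huw : (fun q => fderiv ℝ u q w) =ᶠ[𝓝 p] fun q => H q + fderiv ℝ φ q v :=
    hwv.mono fun q hq => eq_add_of_sub_eq hq
  have hsymm : fderiv ℝ (fderiv ℝ φ) p v w = fderiv ℝ (fderiv ℝ φ) p w v :=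
    hφ.isSymmSndFDerivAt (by simp) v w
  rw [huv.fderiv_eq, huw.fderiv_eq, fderiv_fun_sub hG hφw, fderiv_fun_add hH hφv]
  simp only [sub_apply, add_apply, fderiv_fderiv_apply_const hφ', hsymm]
  abel

theorem fderiv_exp_sin_add_fderiv_exp_cos {u φ : E → ℝ} {p : E} (c : ℝ)
    (hu : DifferentiableAt ℝ u p) (hφ : DifferentiableAt ℝ φ p) (v w : E) :
    fderiv ℝ (fun q => c * exp (u q / 2) * sin (φ q / 2)) p v +
        fderiv ℝ (fun q => -(c * exp (u q / 2) * cos (φ q / 2))) p w =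
      c * exp (u p / 2) / 2 * (sin (φ p / 2) * (fderiv ℝ u p v + fderiv ℝ φ p w) -
        cos (φ p / 2) * (fderiv ℝ u p w - fderiv ℝ φ p v)) := by
  have hasFDerivAt_half {f : E → ℝ} (hf : DifferentiableAt ℝ f p) :
      HasFDerivAt (fun q => f q / 2) ((2 : ℝ)⁻¹ • fderiv ℝ f p) p := by
    simpa only [div_eq_inv_mul] using hf.hasFDerivAt.const_mul (2 : ℝ)⁻¹
  have hE := (hasFDerivAt_half hu).exp.const_mul c
  have hS := (hasFDerivAt_half hφ).sin
  have hC := (hasFDerivAt_half hφ).cos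
  rw [(hE.fun_mul hS).fderiv, (hE.fun_mul hC).fun_neg.fderiv]
  simp only [add_apply, neg_apply, smul_apply, smul_eq_mul]
  ring

end

theorem stmt_13 (a : ℝ) (U : Set (ℝ × ℝ)) (hU : IsOpen U)
    (u φ : ℝ × ℝ → ℝ)
    (hu : ContDiffOn ℝ 2 u U) (hφ : ContDiffOn ℝ 2 φ U)
    (h1 : ∀ p ∈ U, fderiv ℝ u p (1, 0) + fderiv ℝ φ p (0, 1) =
      Real.sqrt 2 * a * Real.exp (u p / 2) * Real.sin (φ p / 2))
    (h2 : ∀ p ∈ U, fderiv ℝ u p (0, 1) - fderiv ℝ φ p (1, 0) =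
      -(Real.sqrt 2 * a * Real.exp (u p / 2) * Real.cos (φ p / 2))) :
    ∀ p ∈ U,
      fderiv ℝ (fun q => fderiv ℝ u q (1, 0)) p (1, 0) +
        fderiv ℝ (fun q => fderiv ℝ u q (0, 1)) p (0, 1) =
      a ^ 2 * Real.exp (u p) := by
  intro p hp
  have hUp : U ∈ 𝓝 p := hU.mem_nhds hp
  have hud : DifferentiableAt ℝ u p := (hu.contDiffAt hUp).differentiableAt two_ne_zero
  have hφp : ContDiffAt ℝ 2 φ p := hφ.contDiffAt hUp
  have hφd : DifferentiableAt ℝ φ p := hφp.differentiableAt two_ne_zero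
  rw [fderiv_fderiv_add_eq_of_cauchyRiemann hφp (by fun_prop) (by fun_prop)
      (eventually_of_mem hUp h1) (eventually_of_mem hUp h2),
    fderiv_exp_sin_add_fderiv_exp_cos _ hud hφd, h1 p hp, h2 p hp]
  have hsqrt : √2 ^ 2 = 2 := sq_sqrt zero_le_two
  have hexp : exp (u p / 2) ^ 2 = exp (u p) := by rw [← exp_nat_mul]; ring_nf
  linear_combination (a ^ 2 * exp (u p / 2) ^ 2 / 2) * hsqrt + a ^ 2 * hexp +
    ((√2 * a) ^ 2 * exp (u p / 2) ^ 2 / 2) * sin_sq_add_cos_sq (φ p / 2)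
end

section
/- Let a > 0 be a real constant, U ⊆ ℂ an open set, and ψ : U → ℂ holomorphic with ψ′(z) ≠ 0 and Re ψ(z) > 0 for every z ∈ U. Identify U with an open subset of ℝ² via z = x + iy and define u(x,y) = 2·ln( √8·|ψ′(x+iy)| / ( a·(ψ(x+iy) + conj(ψ(x+iy))) ) ). Then u is real-valued, twice continuously differentiable, and satisfies the Liouville equation u_xx + u_yy = a²·exp(u) on U. -/
/-!
Write `u = log (2 ‖ψ'‖² / (a Re ψ)²) = log (2 / a²) + 2 log ‖ψ'‖ - 2 log Re ψ`. Since `ψ'` is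
holomorphic without zeros, `log ‖ψ'‖` is harmonic. Since `Re ψ` is harmonic with
`|∇ Re ψ| = ‖ψ'‖`, the chain rule gives `Δ log Re ψ = -‖ψ'‖² / (Re ψ)²`. Hence
`Δ u = 2 ‖ψ'‖² / (Re ψ)² = a² eᵘ`.
-/

open Complex InnerProductSpace Filter Topology Laplacian

section SecondDerivatives

variable {E F : Type*} [NormedAddCommGroup E] [NormedSpace ℝ E]
  [NormedAddCommGroup F] [NormedSpace ℝ F]

theorem fderiv_fderiv_apply_eq_iteratedFDeriv {f : E → F} {x : E}
    (hf : DifferentiableAt ℝ (fderiv ℝ f) x) (v w : E) :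
    fderiv ℝ (fun y => fderiv ℝ f y v) x w = iteratedFDeriv ℝ 2 f x ![w, v] := by
  rw [iteratedFDeriv_two_apply, fderiv_clm_apply hf (differentiableAt_const v)]
  simp

theorem ContDiffAt.differentiableAt_fderiv {f : E → F} {x : E} (hf : ContDiffAt ℝ 2 f x) :
    DifferentiableAt ℝ (fderiv ℝ f) x :=
  (hf.fderiv_right (m := 1) (by norm_num)).differentiableAt one_ne_zero

theorem Filter.EventuallyEq.fderiv_fderiv_apply_eq {f g : E → F} {x : E}
    (h : f =ᶠ[𝓝 x] g) (v : E) :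
    fderiv ℝ (fun y => fderiv ℝ f y v) x = fderiv ℝ (fun y => fderiv ℝ g y v) x := by
  have hfirst : (fun y => fderiv ℝ f y v) =ᶠ[𝓝 x] fun y => fderiv ℝ g y v :=
    h.eventuallyEq_nhds.mono fun _ hy => by simp only [hy.fderiv_eq (𝕜 := ℝ)]
  exact hfirst.fderiv_eq

theorem fderiv_fderiv_comp_apply_same {φ φ' : ℝ → ℝ} {φ'' : ℝ} {h : E → ℝ} {x : E}
    (hφ : ∀ᶠ t in 𝓝 (h x), HasDerivAt φ (φ' t) t) (hφ' : HasDerivAt φ' φ'' (h x))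
    (hh : ContDiffAt ℝ 2 h x) (v : E) :
    fderiv ℝ (fun y => fderiv ℝ (φ ∘ h) y v) x v =
      φ'' * fderiv ℝ h x v ^ 2 + φ' (h x) * fderiv ℝ (fun y => fderiv ℝ h y v) x v := by
  have hh_near : ∀ᶠ y in 𝓝 x, DifferentiableAt ℝ h y :=
    (hh.eventually (by simp)).mono fun y hy => hy.differentiableAt two_ne_zero
  have hφ_near : ∀ᶠ y in 𝓝 x, HasDerivAt φ (φ' (h y)) (h y) :=
    hh.continuousAt.eventually hφ
  have hfirst : (fun y => fderiv ℝ (φ ∘ h) y v) =ᶠ[𝓝 x]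
      fun y => φ' (h y) * fderiv ℝ h y v := by
    filter_upwards [hh_near, hφ_near] with y hy hφy
    rw [(hφy.comp_hasFDerivAt y hy.hasFDerivAt).fderiv]
    simp
  have hDh : HasFDerivAt (fun y => fderiv ℝ h y v) (fderiv ℝ (fun y => fderiv ℝ h y v) x) x :=
    (hh.differentiableAt_fderiv.clm_apply (differentiableAt_const v)).hasFDerivAt
  have hφ'h := hφ'.comp_hasFDerivAt x (hh.differentiableAt two_ne_zero).hasFDerivAt
  have hprod : HasFDerivAt (fun y => φ' (h y) * fderiv ℝ h y v) _ x := hφ'h.mul hDh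
  rw [hfirst.fderiv_eq, hprod.fderiv]
  simp only [add_apply, smul_apply, smul_eq_mul, Function.comp_apply]
  ring

end SecondDerivatives

section ComplexPlane

variable {F : Type*} [NormedAddCommGroup F] [NormedSpace ℝ F]

theorem laplacian_eq_fderiv_fderiv_complexPlane {f : ℂ → F} {z : ℂ}
    (hf : DifferentiableAt ℝ (fderiv ℝ f) z) :
    Δ f z = fderiv ℝ (fun y => fderiv ℝ f y 1) z 1 + fderiv ℝ (fun y => fderiv ℝ f y I) z I := by
  rw [laplacian_eq_iteratedFDeriv_complexPlane, fderiv_fderiv_apply_eq_iteratedFDeriv hf,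
    fderiv_fderiv_apply_eq_iteratedFDeriv hf]

theorem laplacian_comp_equivRealProd {f : ℂ → F} {p : ℝ × ℝ}
    (hf : ContDiffAt ℝ 2 f (equivRealProdCLM.symm p)) :
    fderiv ℝ (fun q => fderiv ℝ (f ∘ equivRealProdCLM.symm) q (1, 0)) p (1, 0) +
      fderiv ℝ (fun q => fderiv ℝ (f ∘ equivRealProdCLM.symm) q (0, 1)) p (0, 1) =
      Δ f (equivRealProdCLM.symm p) := by
  have hcomp : ContDiffAt ℝ 2 (f ∘ equivRealProdCLM.symm) p :=
    hf.comp p equivRealProdCLM.symm.contDiff.contDiffAt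
  have hsymm : ∀ m : Fin 2 → ℝ × ℝ, iteratedFDeriv ℝ 2 (f ∘ equivRealProdCLM.symm) p m =
      iteratedFDeriv ℝ 2 f (equivRealProdCLM.symm p) (fun i => equivRealProdCLM.symm (m i)) := by
    intro m
    simp only [← iteratedFDerivWithin_univ]
    rw [← Set.preimage_univ (f := equivRealProdCLM.symm),
      equivRealProdCLM.symm.iteratedFDerivWithin_comp_right f uniqueDiffOn_univ (Set.mem_univ _)]
    rfl
  rw [fderiv_fderiv_apply_eq_iteratedFDeriv hcomp.differentiableAt_fderiv,
    fderiv_fderiv_apply_eq_iteratedFDeriv hcomp.differentiableAt_fderiv, hsymm, hsymm,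
    laplacian_eq_iteratedFDeriv_complexPlane]
  congr 2 <;> ext i <;> fin_cases i <;> simp [equivRealProdCLM_symm_apply]

end ComplexPlane

theorem HasDerivAt.fderiv_re_apply {f : ℂ → ℂ} {f' z : ℂ} (hf : HasDerivAt f f' z) (v : ℂ) :
    fderiv ℝ (fun y => (f y).re) z v = (f' * v).re := by
  have hre : HasFDerivAt (fun y => (f y).re) _ z :=
    reCLM.hasFDerivAt.comp z (hf.hasFDerivAt.restrictScalars ℝ)
  rw [hre.fderiv]
  simp [mul_comm]

theorem AnalyticAt.contDiffAt_log_re {f : ℂ → ℂ} {z : ℂ} (hf : AnalyticAt ℂ f z)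
    (hz : 0 < (f z).re) : ContDiffAt ℝ 2 (fun y => Real.log (f y).re) z :=
  (Real.contDiffAt_log.2 hz.ne').comp (g := Real.log) z hf.harmonicAt_re.1

theorem AnalyticAt.laplacian_log_re {f : ℂ → ℂ} {z : ℂ} (hf : AnalyticAt ℂ f z)
    (hz : 0 < (f z).re) :
    Δ (fun y => Real.log (f y).re) z = -(‖deriv f z‖ ^ 2 / (f z).re ^ 2) := by
  have hre := hf.harmonicAt_re
  have hlog : ContDiffAt ℝ 2 (Real.log ∘ fun y => (f y).re) z := hf.contDiffAt_log_re hz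
  have hlog' : ∀ᶠ t in 𝓝 (f z).re, HasDerivAt Real.log t⁻¹ t :=
    (eventually_ne_nhds hz.ne').mono fun t ht => Real.hasDerivAt_log ht
  have hsecond := fun v => fderiv_fderiv_comp_apply_same (h := fun y => (f y).re) hlog'
    (hasDerivAt_inv hz.ne') hre.1 v
  have hharm : Δ (fun y => (f y).re) z = 0 := hre.2.self_of_nhds
  have hderiv := hf.differentiableAt.hasDerivAt
  rw [laplacian_eq_fderiv_fderiv_complexPlane hre.1.differentiableAt_fderiv] at hharm
  rw [show (fun y => Real.log (f y).re) = Real.log ∘ fun y => (f y).re from rfl,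
    laplacian_eq_fderiv_fderiv_complexPlane hlog.differentiableAt_fderiv, hsecond, hsecond,
    hderiv.fderiv_re_apply, hderiv.fderiv_re_apply, Complex.sq_norm, Complex.normSq_apply]
  simp only [mul_one, mul_I_re]
  linear_combination (f z).re⁻¹ * hharm

noncomputable def liouvilleSolution (a : ℝ) (ψ : ℂ → ℂ) (z : ℂ) : ℝ :=
  Real.log (2 / a ^ 2) + 2 * (Real.log ‖deriv ψ z‖ - Real.log (ψ z).re)

section LiouvilleSolution

variable {a : ℝ} {ψ : ℂ → ℂ} {z : ℂ}

theorem liouvilleSolution_eq_add_smul :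
    liouvilleSolution a ψ =
      (fun _ => Real.log (2 / a ^ 2)) +
        (2 : ℝ) • ((fun y => Real.log ‖deriv ψ y‖) - fun y => Real.log (ψ y).re) :=
  rfl

theorem contDiffAt_liouvilleSolution (hψ : AnalyticAt ℂ ψ z) (hψ' : deriv ψ z ≠ 0)
    (hre : 0 < (ψ z).re) : ContDiffAt ℝ 2 (liouvilleSolution a ψ) z :=
  contDiffAt_const.add
    (contDiffAt_const.mul ((hψ.deriv.harmonicAt_log_norm hψ').1.sub (hψ.contDiffAt_log_re hre)))

theorem laplacian_liouvilleSolution (ha : a ≠ 0) (hψ : AnalyticAt ℂ ψ z) (hψ' : deriv ψ z ≠ 0)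
    (hre : 0 < (ψ z).re) :
    Δ (liouvilleSolution a ψ) z = a ^ 2 * Real.exp (liouvilleSolution a ψ z) := by
  have hnorm := hψ.deriv.harmonicAt_log_norm hψ'
  have hlogre := hψ.contDiffAt_log_re hre
  have hdiff : ContDiffAt ℝ 2
      ((fun y => Real.log ‖deriv ψ y‖) - fun y => Real.log (ψ y).re) z :=
    hnorm.1.sub hlogre
  have hsmul : ContDiffAt ℝ 2 ((2 : ℝ) •
      ((fun y => Real.log ‖deriv ψ y‖) - fun y => Real.log (ψ y).re)) z :=
    hdiff.const_smul (2 : ℝ)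
  have hexp : Real.exp (2 * (Real.log ‖deriv ψ z‖ - Real.log (ψ z).re)) =
      (‖deriv ψ z‖ / (ψ z).re) ^ 2 := by
    rw [mul_comm, Real.exp_mul, Real.exp_sub, Real.exp_log (norm_pos_iff.2 hψ'),
      Real.exp_log hre, Real.rpow_two]
  rw [liouvilleSolution_eq_add_smul, contDiffAt_const.laplacian_add hsmul,
    laplacian_const, laplacian_smul _ hdiff, hnorm.1.laplacian_sub hlogre, hnorm.2.self_of_nhds,
    hψ.laplacian_log_re hre]
  simp only [Pi.add_apply, Pi.smul_apply, Pi.sub_apply, Pi.zero_apply, smul_eq_mul, Real.exp_add,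
    Real.exp_log (by positivity : (0 : ℝ) < 2 / a ^ 2), hexp]
  field_simp
  ring

theorem ofReal_liouvilleSolution (ha : 0 < a) (hψ' : deriv ψ z ≠ 0) (hre : 0 < (ψ z).re) :
    (liouvilleSolution a ψ z : ℂ) =
      2 * Complex.log ((Real.sqrt 8 : ℂ) * (‖deriv ψ z‖ : ℂ) /
        ((a : ℂ) * (ψ z + starRingEnd ℂ (ψ z)))) := by
  have hnorm_pos : 0 < ‖deriv ψ z‖ := norm_pos_iff.2 hψ'
  set X := Real.sqrt 8 * ‖deriv ψ z‖ / (a * (2 * (ψ z).re)) with hXdef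
  have hX : X ^ 2 = 2 / a ^ 2 * (‖deriv ψ z‖ / (ψ z).re) ^ 2 := by
    rw [div_pow, mul_pow, Real.sq_sqrt (by norm_num)]
    field_simp
    ring
  have hlog : liouvilleSolution a ψ z = 2 * Real.log X := by
    rw [liouvilleSolution, ← Real.log_div hnorm_pos.ne' hre.ne']
    calc _ = Real.log (X ^ 2) := by
          rw [hX, Real.log_mul (by positivity) (by positivity), Real.log_pow]
          norm_num
      _ = 2 * Real.log X := by rw [Real.log_pow]; norm_num
  have hXcast : (X : ℂ) = (Real.sqrt 8 : ℂ) * (‖deriv ψ z‖ : ℂ) /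
      ((a : ℂ) * (ψ z + starRingEnd ℂ (ψ z))) := by
    rw [hXdef, Complex.add_conj]
    push_cast
    ring
  rw [hlog, Complex.ofReal_mul, Complex.ofReal_log (by positivity), hXcast]
  norm_num

end LiouvilleSolution

theorem stmt_15 (a : ℝ) (ha : 0 < a) (U : Set ℂ) (hU : IsOpen U)
    (ψ : ℂ → ℂ) (hψ : DifferentiableOn ℂ ψ U)
    (hψ' : ∀ z ∈ U, deriv ψ z ≠ 0) (hre : ∀ z ∈ U, 0 < (ψ z).re)
    (V : Set (ℝ × ℝ)) (hV : V = {p : ℝ × ℝ | (p.1 : ℂ) + (p.2 : ℂ) * Complex.I ∈ U})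
    (u : ℝ × ℝ → ℂ)
    (hu : u = fun p => 2 * Complex.log
      ((Real.sqrt 8 : ℂ) * (‖deriv ψ ((p.1 : ℂ) + (p.2 : ℂ) * Complex.I)‖ : ℂ) /
        ((a : ℂ) * (ψ ((p.1 : ℂ) + (p.2 : ℂ) * Complex.I) +
          starRingEnd ℂ (ψ ((p.1 : ℂ) + (p.2 : ℂ) * Complex.I)))))) :
    (∀ p ∈ V, (u p).im = 0) ∧
    ContDiffOn ℝ 2 (fun p => (u p).re) V ∧
    ∀ p ∈ V,
      fderiv ℝ (fun q => fderiv ℝ (fun q' => (u q').re) q (1, 0)) p (1, 0) +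
        fderiv ℝ (fun q => fderiv ℝ (fun q' => (u q').re) q (0, 1)) p (0, 1) =
      a ^ 2 * Real.exp ((u p).re) := by
  set γ : (ℝ × ℝ) ≃L[ℝ] ℂ := equivRealProdCLM.symm
  have hV' : V = γ ⁻¹' U := by simp [hV, γ, equivRealProdCLM_symm_apply, Set.preimage]
  have hVopen : IsOpen V := hV' ▸ hU.preimage γ.continuous
  have hmem : ∀ p ∈ V, γ p ∈ U := fun p hp => by rwa [hV'] at hp
  have hAn : AnalyticOnNhd ℂ ψ U := hψ.analyticOnNhd hU
  have hu_eq : ∀ p ∈ V, u p = liouvilleSolution a ψ (γ p) := fun p hp => by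
    rw [ofReal_liouvilleSolution ha (hψ' _ (hmem p hp)) (hre _ (hmem p hp)), hu,
      equivRealProdCLM_symm_apply]
  have hre_eq : Set.EqOn (fun p => (u p).re) (liouvilleSolution a ψ ∘ γ) V := fun p hp => by
    simp [hu_eq p hp]
  have hsmooth : ∀ p ∈ V, ContDiffAt ℝ 2 (liouvilleSolution a ψ) (γ p) := fun p hp =>
    contDiffAt_liouvilleSolution (hAn _ (hmem p hp)) (hψ' _ (hmem p hp)) (hre _ (hmem p hp))
  refine ⟨fun p hp => by simp [hu_eq p hp], ?_, fun p hp => ?_⟩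
  · exact ContDiffOn.congr
      (fun p hp => ((hsmooth p hp).comp p γ.contDiff.contDiffAt).contDiffWithinAt) hre_eq
  · have heq := Filter.eventuallyEq_of_mem (hVopen.mem_nhds hp) hre_eq
    rw [heq.fderiv_fderiv_apply_eq, heq.fderiv_fderiv_apply_eq,
      laplacian_comp_equivRealProd (hsmooth p hp), show (u p).re = _ from hre_eq hp]
    exact laplacian_liouvilleSolution ha.ne' (hAn _ (hmem p hp)) (hψ' _ (hmem p hp))
      (hre _ (hmem p hp))
end
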